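/- Let X_s and X_t be real random variables on a common probability space, F_t the distribution function of X_t, V uniform on [0,1] independent of (X_s, X_t), and F̃_t the distributional transform of F_t (using V). Suppose δ > 0 satisfies P(|F̃_t(X_t) − F̃_t(X_s)| > δ²) ≤ L·δ². Then for every x ∈ ℝ, P(X_s ≤ x < X_t) ≤ (L+1)·δ². -/

import Mathlib

/-! Off the exceptional event of the hypothesis and for `V ∈ [0, 1]`, on `{Xs ≤ x < Xt}` we have
`F̃(Xt) ≤ F̃(Xs) + δ² ≤ F(Xs) + δ² ≤ F(x) + δ²`. Since also `F̃(Xt) ≤ F(x)` on `{Xt ≤ x}`, the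
one-sided uniformity `P(F̃(X) ≤ s) ≤ s` of the distributional transform bounds
`P(F̃(Xt) ≤ F(x) + δ², x < Xt)` by `F(x) + δ² - P(Xt ≤ x) = δ²`.

For that bound, let `q` be the generalized inverse of `F` at level `s`: `F̃(X) ≤ s` forces
`X < q`, an event of probability `F(q⁻)`, or `X = q` and `V·P(X = q) ≤ s - F(q⁻)`, which by the
independence of `V` has probability at most `s - F(q⁻)`. -/

open MeasureTheory ProbabilityTheory Function Set

noncomputable def distribTransform (F : ℝ → ℝ) (y v : ℝ) : ℝ :=
  leftLim F y + v * (F y - leftLim F y)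

section distribTransform

variable {F : ℝ → ℝ} {y v : ℝ}

lemma leftLim_le_distribTransform (hF : Monotone F) (hv : 0 ≤ v) :
    leftLim F y ≤ distribTransform F y v :=
  le_add_of_nonneg_right (mul_nonneg hv (sub_nonneg.2 (hF.leftLim_le le_rfl)))

lemma distribTransform_le (hF : Monotone F) (hv : v ≤ 1) : distribTransform F y v ≤ F y := by
  have := hF.leftLim_le (le_refl y)
  unfold distribTransform
  nlinarith

end distribTransform

lemma Monotone.exists_leftLim_le_lt_leftLim {F : ℝ → ℝ} (hF : Monotone F) {t : ℝ}
    (hlo : ∃ a, F a ≤ t) (hhi : ∃ b, t < F b) :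
    ∃ q, leftLim F q ≤ t ∧ ∀ y, q < y → t < leftLim F y := by
  obtain ⟨a, ha⟩ := hlo
  have hbdd : BddBelow {y | t < F y} := ⟨a, fun z hz => (hF.reflect_lt (ha.trans_lt hz)).le⟩
  refine ⟨sInf {y | t < F y}, ?_, fun y hy => ?_⟩
  · rw [hF.leftLim_eq_sSup]
    refine csSup_le (nonempty_Iio.image F) ?_
    rintro _ ⟨z, hz, rfl⟩
    exact not_lt.1 (notMem_of_lt_csInf (s := {y | t < F y}) hz hbdd)
  · obtain ⟨z, hz, hzy⟩ := exists_lt_of_csInf_lt hhi hy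
    exact (show t < F z from hz).trans_le (hF.le_leftLim hzy)

lemma MeasureTheory.measureReal_mono_ae {α : Type*} [MeasurableSpace α] {μ : Measure α}
    [IsFiniteMeasure μ] {s t : Set α} (h : s ≤ᵐ[μ] t) : μ.real s ≤ μ.real t :=
  ENNReal.toReal_mono (measure_ne_top μ t) (measure_mono_ae h)

section distribution

variable {Ω : Type*} [MeasurableSpace Ω] {P : Measure Ω} {X V : Ω → ℝ}

lemma measureReal_le_eq_cdf [IsProbabilityMeasure P] (hX : Measurable X) (a : ℝ) :
    P.real {ω | X ω ≤ a} = cdf (P.map X) a := by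
  have := Measure.isProbabilityMeasure_map (μ := P) hX.aemeasurable
  rw [cdf_eq_real, map_measureReal_apply hX measurableSet_Iic]
  rfl

lemma measureReal_lt_eq_leftLim_cdf [IsProbabilityMeasure P] (hX : Measurable X) (a : ℝ) :
    P.real {ω | X ω < a} = leftLim (cdf (P.map X)) a := by
  have := Measure.isProbabilityMeasure_map (μ := P) hX.aemeasurable
  have h := (cdf (P.map X)).measure_Iio (tendsto_cdf_atBot _) a
  rw [measure_cdf, sub_zero] at h
  rw [show {ω | X ω < a} = X ⁻¹' Iio a from rfl, ← map_measureReal_apply hX measurableSet_Iio,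
    Measure.real, h, ENNReal.toReal_ofReal]
  exact (cdf_nonneg _ (a - 1)).trans ((monotone_cdf _).le_leftLim (sub_one_lt a))

lemma measureReal_eq_eq_cdf_sub_leftLim [IsProbabilityMeasure P] (hX : Measurable X) (a : ℝ) :
    P.real {ω | X ω = a} = cdf (P.map X) a - leftLim (cdf (P.map X)) a := by
  have := Measure.isProbabilityMeasure_map (μ := P) hX.aemeasurable
  have h := (cdf (P.map X)).measure_singleton a
  rw [measure_cdf] at h
  rw [show {ω | X ω = a} = X ⁻¹' {a} from rfl,
    ← map_measureReal_apply hX (measurableSet_singleton a), Measure.real, h,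
    ENNReal.toReal_ofReal (sub_nonneg.2 ((monotone_cdf _).leftLim_le le_rfl))]

lemma ae_mem_Icc_of_map_eq_restrict (hV : Measurable V)
    (hVunif : P.map V = volume.restrict (Icc 0 1)) : ∀ᵐ ω ∂P, V ω ∈ Icc 0 1 :=
  ae_of_ae_map hV.aemeasurable (hVunif ▸ ae_restrict_mem measurableSet_Icc)

lemma measureReal_le_le_of_map_eq_restrict (hV : Measurable V)
    (hVunif : P.map V = volume.restrict (Icc 0 1)) {r : ℝ} (hr : 0 ≤ r) :
    P.real {ω | V ω ≤ r} ≤ r := by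
  rw [show {ω | V ω ≤ r} = V ⁻¹' Iic r from rfl, ← map_measureReal_apply hV measurableSet_Iic,
    hVunif, measureReal_restrict_apply measurableSet_Iic]
  calc volume.real (Iic r ∩ Icc 0 1) ≤ volume.real (Icc 0 r) :=
        measureReal_mono (fun v hv => ⟨hv.2.1, hv.1⟩) measure_Icc_lt_top.ne
    _ = r := by simp [hr]

lemma measureReal_mem_and_mul_le [IsProbabilityMeasure P] (hV : Measurable V)
    (hVunif : P.map V = volume.restrict (Icc 0 1)) (hindep : IndepFun X V P) {s : Set ℝ}
    (hs : MeasurableSet s) {c : ℝ} (hc : 0 ≤ c) :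
    P.real {ω | X ω ∈ s ∧ P.real (X ⁻¹' s) * V ω ≤ c} ≤ c := by
  rcases (measureReal_nonneg (μ := P) (s := X ⁻¹' s)).eq_or_lt with hp | hp
  · exact (measureReal_mono fun ω hω => hω.1).trans (hp ▸ hc)
  set p := P.real (X ⁻¹' s)
  have hset : {ω | X ω ∈ s ∧ p * V ω ≤ c} = X ⁻¹' s ∩ V ⁻¹' Iic (c / p) := by
    ext ω
    simp only [mem_ofPred_eq, mem_inter_iff, mem_preimage, mem_Iic, le_div_iff₀' hp]
  calc P.real {ω | X ω ∈ s ∧ p * V ω ≤ c} = p * P.real {ω | V ω ≤ c / p} := by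
        rw [hset, Measure.real, hindep.measure_inter_preimage_eq_mul _ _ hs measurableSet_Iic,
          ENNReal.toReal_mul]
        rfl
    _ ≤ p * (c / p) := by
        gcongr
        exact measureReal_le_le_of_map_eq_restrict hV hVunif (div_nonneg hc hp.le)
    _ = c := mul_div_cancel₀ c hp.ne'

lemma measureReal_distribTransform_le_of_pos [IsProbabilityMeasure P] (hX : Measurable X)
    (hV : Measurable V) (hVunif : P.map V = volume.restrict (Icc 0 1)) (hindep : IndepFun X V P)
    {t : ℝ} (ht : 0 < t) :
    P.real {ω | distribTransform (cdf (P.map X)) (X ω) (V ω) ≤ t} ≤ t := by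
  rcases le_or_gt 1 t with ht1 | ht1
  · exact measureReal_le_one.trans ht1
  have := Measure.isProbabilityMeasure_map (μ := P) hX.aemeasurable
  set F := cdf (P.map X)
  obtain ⟨q, hq, hlt⟩ := (monotone_cdf (P.map X)).exists_leftLim_le_lt_leftLim
    (((tendsto_cdf_atBot _).eventually (gt_mem_nhds ht)).exists.imp fun _ => le_of_lt)
    ((tendsto_cdf_atTop _).eventually (lt_mem_nhds ht1)).exists
  have hcover : ({ω | distribTransform F (X ω) (V ω) ≤ t} : Set Ω) ≤ᵐ[P]
      ({ω | X ω < q} ∪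
        {ω | X ω ∈ ({q} : Set ℝ) ∧ P.real (X ⁻¹' {q}) * V ω ≤ t - leftLim F q} : Set Ω) := by
    filter_upwards [ae_mem_Icc_of_map_eq_restrict hV hVunif] with ω hv hle
    rcases lt_trichotomy (X ω) q with hXq | hXq | hXq
    · exact Or.inl hXq
    · refine Or.inr ⟨hXq, ?_⟩
      have hle' : distribTransform F q (V ω) ≤ t := hXq ▸ hle
      rw [show X ⁻¹' {q} = {ω | X ω = q} from rfl, measureReal_eq_eq_cdf_sub_leftLim hX q]
      unfold distribTransform at hle'
      linarith
    · exact absurd hle (not_le.2 ((hlt _ hXq).trans_le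
        (leftLim_le_distribTransform (monotone_cdf _) hv.1)))
  calc P.real {ω | distribTransform F (X ω) (V ω) ≤ t}
      ≤ P.real ({ω | X ω < q} ∪
          {ω | X ω ∈ ({q} : Set ℝ) ∧ P.real (X ⁻¹' {q}) * V ω ≤ t - leftLim F q}) :=
        measureReal_mono_ae hcover
    _ ≤ leftLim F q + (t - leftLim F q) :=
        (measureReal_union_le _ _).trans (add_le_add (measureReal_lt_eq_leftLim_cdf hX q).le
          (measureReal_mem_and_mul_le hV hVunif hindep (measurableSet_singleton q)
            (sub_nonneg.2 hq)))
    _ = t := add_sub_cancel _ _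

lemma measureReal_distribTransform_le [IsProbabilityMeasure P] (hX : Measurable X)
    (hV : Measurable V) (hVunif : P.map V = volume.restrict (Icc 0 1)) (hindep : IndepFun X V P)
    {t : ℝ} (ht : 0 ≤ t) :
    P.real {ω | distribTransform (cdf (P.map X)) (X ω) (V ω) ≤ t} ≤ t :=
  -- at `t = 0` the generalized inverse of `F` may be `-∞`, so approach `t` from above
  le_of_forall_gt_imp_ge_of_dense fun _ htt' =>
    (measureReal_mono fun _ hω => le_trans hω htt'.le).trans
      (measureReal_distribTransform_le_of_pos hX hV hVunif hindep (ht.trans_lt htt'))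

lemma measureReal_distribTransform_le_and_lt [IsProbabilityMeasure P] (hX : Measurable X)
    (hV : Measurable V) (hVunif : P.map V = volume.restrict (Icc 0 1)) (hindep : IndepFun X V P)
    {x s : ℝ} (hs : cdf (P.map X) x ≤ s) :
    P.real {ω | distribTransform (cdf (P.map X)) (X ω) (V ω) ≤ s ∧ x < X ω}
      ≤ s - cdf (P.map X) x := by
  set F := cdf (P.map X)
  have hcover : ({ω | distribTransform F (X ω) (V ω) ≤ s ∧ x < X ω} ∪ {ω | X ω ≤ x} : Set Ω)
      ≤ᵐ[P] {ω | distribTransform F (X ω) (V ω) ≤ s} := by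
    filter_upwards [ae_mem_Icc_of_map_eq_restrict hV hVunif] with ω hv hω
    rcases hω with hω | hω
    · exact hω.1
    · exact (distribTransform_le (monotone_cdf _) hv.2).trans ((monotone_cdf _ hω).trans hs)
  have hdisj : Disjoint {ω | distribTransform F (X ω) (V ω) ≤ s ∧ x < X ω} {ω | X ω ≤ x} :=
    disjoint_left.2 fun _ hω hω' => not_le.2 hω.2 hω'
  have hsum := measureReal_union (μ := P) hdisj (hX measurableSet_Iic)
  rw [measureReal_le_eq_cdf hX] at hsum
  have hmono := (measureReal_mono_ae hcover).trans
    (measureReal_distribTransform_le hX hV hVunif hindep ((cdf_nonneg _ x).trans hs))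
  linarith

end distribution

theorem stmt_3_general {Ω : Type*} [MeasurableSpace Ω] (P : Measure Ω) [IsProbabilityMeasure P]
    (Xs Xt V : Ω → ℝ) (hXt : Measurable Xt) (hV : Measurable V)
    (hVunif : Measure.map V P = volume.restrict (Set.Icc (0:ℝ) 1))
    (hindep : IndepFun (fun ω => (Xs ω, Xt ω)) V P)
    (F : ℝ → ℝ) (hF : ∀ x, F x = (P {ω | Xt ω ≤ x}).toReal)
    (Ftil : ℝ → Ω → ℝ)
    (hFtil : ∀ x ω, Ftil x ω = leftLim F x + V ω * (F x - leftLim F x))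
    (L δ : ℝ)
    (hyp : (P {ω | |Ftil (Xt ω) ω - Ftil (Xs ω) ω| > δ ^ 2}).toReal ≤ L * δ ^ 2) :
    ∀ x : ℝ, (P {ω | Xs ω ≤ x ∧ x < Xt ω}).toReal ≤ (L + 1) * δ ^ 2 := by
  intro x
  obtain rfl : F = cdf (P.map Xt) := funext fun y => (hF y).trans (measureReal_le_eq_cdf hXt y)
  obtain rfl : Ftil = fun y ω => distribTransform (cdf (P.map Xt)) y (V ω) := funext₂ hFtil
  set F := ⇑(cdf (P.map Xt))
  have hmono : Monotone F := monotone_cdf _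
  set B : Set Ω :=
    {ω | |distribTransform F (Xt ω) (V ω) - distribTransform F (Xs ω) (V ω)| > δ ^ 2}
  set C : Set Ω := {ω | distribTransform F (Xt ω) (V ω) ≤ F x + δ ^ 2 ∧ x < Xt ω}
  have hcover : ({ω | Xs ω ≤ x ∧ x < Xt ω} : Set Ω) ≤ᵐ[P] (B ∪ C : Set Ω) := by
    filter_upwards [ae_mem_Icc_of_map_eq_restrict hV hVunif] with ω hv ⟨hsx, hxt⟩
    by_cases hB : ω ∈ B
    · exact Or.inl hB
    refine Or.inr ⟨?_, hxt⟩
    have hclose := (abs_le.1 (not_lt.1 (show ¬ _ > δ ^ 2 from hB))).2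
    have hXs := (distribTransform_le hmono hv.2).trans (hmono hsx)
    linarith
  have hC := measureReal_distribTransform_le_and_lt hXt hV hVunif
    (hindep.comp measurable_snd measurable_id) (le_add_of_nonneg_right (sq_nonneg δ)) (x := x)
  calc P.real {ω | Xs ω ≤ x ∧ x < Xt ω} ≤ P.real (B ∪ C) := measureReal_mono_ae hcover
    _ ≤ P.real B + P.real C := measureReal_union_le _ _
    _ ≤ L * δ ^ 2 + δ ^ 2 := add_le_add hyp (by simpa using hC)
    _ = (L + 1) * δ ^ 2 := by ring

/-- If the distributional transform `F̃_t` of the cdf of `X_t` (built with a uniform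
`V` independent of `(X_s, X_t)`) satisfies `P(|F̃_t(X_t) − F̃_t(X_s)| > δ²) ≤ L·δ²`,
then `P(X_s ≤ x < X_t) ≤ (L+1)·δ²` for every real `x`. -/
theorem stmt_3 {Ω : Type*} [MeasurableSpace Ω] (P : Measure Ω) [IsProbabilityMeasure P]
    (Xs Xt V : Ω → ℝ) (hXs : Measurable Xs) (hXt : Measurable Xt) (hV : Measurable V)
    (hVunif : Measure.map V P = volume.restrict (Set.Icc (0:ℝ) 1))
    (hindep : IndepFun (fun ω => (Xs ω, Xt ω)) V P)
    (F : ℝ → ℝ) (hF : ∀ x, F x = (P {ω | Xt ω ≤ x}).toReal)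
    (Ftil : ℝ → Ω → ℝ)
    (hFtil : ∀ x ω, Ftil x ω = leftLim F x + V ω * (F x - leftLim F x))
    (L δ : ℝ) (hL : 0 ≤ L) (hδ : 0 < δ)
    (hyp : (P {ω | |Ftil (Xt ω) ω - Ftil (Xs ω) ω| > δ ^ 2}).toReal ≤ L * δ ^ 2) :
    ∀ x : ℝ, (P {ω | Xs ω ≤ x ∧ x < Xt ω}).toReal ≤ (L + 1) * δ ^ 2 :=
  stmt_3_general P Xs Xt V hXt hV hVunif hindep F hF Ftil hFtil L δ hyp
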